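/- For every f ∈ H²(𝔻) and every k ∈ ℕ, ‖σ_{1−1/k} f‖_k ≤ ‖f‖_{H²} / (1 − e^{−2})^{1/2}, where σ_r f(z) = f(rz) and ‖g‖_k = ( (1/k) Σ_{j=0}^{k−1} |g(ω_k^j)|² )^{1/2}. -/

import Mathlib

/-!
Put `r = 1 - 1/k` and `ζ = exp(2πi/k)`. Grouping the power series of `f` by residue classes
mod `k`, the samples `f (r ζ^j)` form the discrete Fourier transform of the vector
`b m = ∑_l c (lk+m) r^(lk+m)`, so by Parseval their mean square is `∑_m ‖b m‖²`.
Cauchy–Schwarz bounds `‖b m‖²` by `(∑_l ‖c (lk+m)‖²) / (1 - r^(2k))`, and summing over `m`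
recovers `‖f‖²_{H²} / (1 - r^(2k))`; finally `(1 - 1/k)^(2k) ≤ e^(-2)`.
-/

open Complex

/-- The `j`-th `k`-th root of unity, `exp(2πij/k)`. -/
noncomputable def unitRoot (k j : ℕ) : ℂ :=
  Complex.exp (2 * (Real.pi : ℂ) * Complex.I * (j : ℂ) / (k : ℂ))

open ComplexConjugate Finset

theorem Summable.tsum_eq_sum_tsum_mul_add {α : Type*} [AddCommGroup α] [UniformSpace α]
    [IsUniformAddGroup α] [CompleteSpace α] [T0Space α] {u : ℕ → α} (hu : Summable u)
    {k : ℕ} [NeZero k] :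
    ∑' n, u n = ∑ m : Fin k, ∑' l, u (l * k + m) := by
  let e : Fin k × ℕ ≃ ℕ := (Equiv.prodComm (Fin k) ℕ).trans (Nat.divModEquiv k).symm
  calc ∑' n, u n = ∑' p : Fin k × ℕ, u (e p) := (e.tsum_eq u).symm
    _ = ∑' (m : Fin k) (l : ℕ), u (l * k + m) := ((e.summable_iff).2 hu).tsum_prod
    _ = ∑ m : Fin k, ∑' l, u (l * k + m) := tsum_fintype _

theorem tsum_mul_pow_eq_sum_pow_mul_tsum {a : ℕ → ℂ} {ζ : ℂ} {k : ℕ} [NeZero k]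
    (hζ : ζ ^ k = 1) (ha : Summable fun n => a n * ζ ^ n) :
    ∑' n, a n * ζ ^ n = ∑ m : Fin k, ζ ^ (m : ℕ) * ∑' l, a (l * k + m) := by
  rw [ha.tsum_eq_sum_tsum_mul_add (k := k)]
  refine sum_congr rfl fun m _ => ?_
  rw [← tsum_mul_left]
  refine tsum_congr fun l => ?_
  rw [pow_add, pow_mul', hζ, one_pow, one_mul, mul_comm]

theorem sq_norm_tsum_mul_le {ι R : Type*} [NormedRing R] [CompleteSpace R] {a b : ι → R}
    (ha : Summable fun i => ‖a i‖ ^ 2) (hb : Summable fun i => ‖b i‖ ^ 2) :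
    ‖∑' i, a i * b i‖ ^ 2 ≤ (∑' i, ‖a i‖ ^ 2) * ∑' i, ‖b i‖ ^ 2 := by
  have hab : Summable fun i => a i * b i :=
    Summable.of_norm_bounded ((ha.add hb).div_const 2) fun i =>
      (norm_mul_le _ _).trans (by nlinarith [sq_nonneg (‖a i‖ - ‖b i‖)])
  refine le_of_tendsto_of_tendsto' (hab.hasSum.norm.pow 2)
    (Filter.Tendsto.mul ha.hasSum hb.hasSum) fun s => ?_
  calc ‖∑ i ∈ s, a i * b i‖ ^ 2 ≤ (∑ i ∈ s, ‖a i‖ * ‖b i‖) ^ 2 := by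
        gcongr
        exact (norm_sum_le _ _).trans (sum_le_sum fun i _ => norm_mul_le _ _)
    _ ≤ (∑ i ∈ s, ‖a i‖ ^ 2) * ∑ i ∈ s, ‖b i‖ ^ 2 := sum_mul_sq_le_sq_mul_sq _ _ _

theorem hasSum_sq_pow_mul_add {r : ℝ} (hr0 : 0 ≤ r) (hr1 : r < 1) {k : ℕ} (hk : k ≠ 0) (m : ℕ) :
    HasSum (fun l => (r ^ (l * k + m)) ^ 2) (r ^ (2 * m) / (1 - r ^ (2 * k))) := by
  have hrk : r ^ (2 * k) < 1 := pow_lt_one₀ hr0 hr1 (by omega)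
  have hterm :
      (fun l : ℕ => (r ^ (l * k + m)) ^ 2) = fun l => r ^ (2 * m) * (r ^ (2 * k)) ^ l := by
    ext l
    ring
  rw [hterm, div_eq_mul_inv]
  exact (hasSum_geometric_of_lt_one (by positivity) hrk).mul_left _

theorem sq_norm_tsum_mul_pow_mul_add_le {a : ℕ → ℂ} (ha : Summable fun l => ‖a l‖ ^ 2) {r : ℝ}
    (hr0 : 0 ≤ r) (hr1 : r < 1) {k : ℕ} (hk : k ≠ 0) (m : ℕ) :
    ‖∑' l, a l * (r : ℂ) ^ (l * k + m)‖ ^ 2 ≤ (∑' l, ‖a l‖ ^ 2) / (1 - r ^ (2 * k)) := by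
  have hnorm : ∀ n : ℕ, ‖(r : ℂ) ^ n‖ = r ^ n := fun n => by
    rw [norm_pow, norm_real, Real.norm_of_nonneg hr0]
  have hgeom := hasSum_sq_pow_mul_add hr0 hr1 hk m
  calc ‖∑' l, a l * (r : ℂ) ^ (l * k + m)‖ ^ 2
      ≤ (∑' l, ‖a l‖ ^ 2) * ∑' l, ‖(r : ℂ) ^ (l * k + m)‖ ^ 2 :=
        sq_norm_tsum_mul_le ha (by simpa only [hnorm] using hgeom.summable)
    _ = (∑' l, ‖a l‖ ^ 2) * r ^ (2 * m) / (1 - r ^ (2 * k)) := by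
        simp_rw [hnorm, hgeom.tsum_eq, mul_div_assoc]
    _ ≤ (∑' l, ‖a l‖ ^ 2) / (1 - r ^ (2 * k)) :=
        div_le_div_of_nonneg_right
          (mul_le_of_le_one_right (tsum_nonneg fun _ => by positivity) (pow_le_one₀ hr0 hr1.le))
          (sub_nonneg.2 (pow_le_one₀ hr0 hr1.le))

theorem IsPrimitiveRoot.sum_pow_mul_conj_pow_eq_ite {ζ : ℂ} {k : ℕ} (hζ : IsPrimitiveRoot ζ k)
    (m m' : Fin k) :
    ∑ j : Fin k, (ζ ^ (m : ℕ) * conj (ζ ^ (m' : ℕ))) ^ (j : ℕ) = if m = m' then k else 0 := by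
  have hk : k ≠ 0 := m.pos.ne'
  have hnorm : ‖ζ‖ = 1 := hζ.norm'_eq_one hk
  rw [← inv_eq_conj (by rw [norm_pow, hnorm, one_pow]), Fin.sum_univ_eq_sum_range]
  split_ifs with h
  · simp [h, hζ.ne_zero hk]
  · have hx : ζ ^ (m : ℕ) * (ζ ^ (m' : ℕ))⁻¹ ≠ 1 := fun h1 =>
      h (Fin.ext (hζ.pow_inj m.2 m'.2 (mul_inv_eq_one₀ (pow_ne_zero _ (hζ.ne_zero hk)) |>.1 h1)))
    rw [geom_sum_eq hx, mul_pow, inv_pow, pow_right_comm, pow_right_comm ζ (m' : ℕ),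
      hζ.pow_eq_one]
    simp

theorem IsPrimitiveRoot.sum_sq_norm_sum_pow_mul {ζ : ℂ} {k : ℕ} (hζ : IsPrimitiveRoot ζ k)
    (b : Fin k → ℂ) :
    ∑ j : Fin k, ‖∑ m : Fin k, (ζ ^ (j : ℕ)) ^ (m : ℕ) * b m‖ ^ 2
      = k * ∑ m : Fin k, ‖b m‖ ^ 2 := by
  have hexpand : ∀ j : Fin k, (∑ m : Fin k, (ζ ^ (j : ℕ)) ^ (m : ℕ) * b m) *
      conj (∑ m : Fin k, (ζ ^ (j : ℕ)) ^ (m : ℕ) * b m)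
        = ∑ m : Fin k, ∑ m' : Fin k,
            b m * conj (b m') * (ζ ^ (m : ℕ) * conj (ζ ^ (m' : ℕ))) ^ (j : ℕ) := by
    intro j
    rw [map_sum, sum_mul_sum]
    refine sum_congr rfl fun m _ => sum_congr rfl fun m' _ => ?_
    simp only [map_mul, map_pow]
    ring
  apply ofReal_injective
  push_cast
  simp_rw [← mul_conj', hexpand]
  rw [sum_comm, mul_sum]
  refine sum_congr rfl fun m _ => ?_
  rw [sum_comm]
  simp_rw [← mul_sum, hζ.sum_pow_mul_conj_pow_eq_ite]
  simp [mul_comm]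

theorem unitRoot_eq_pow (k j : ℕ) : unitRoot k j = exp (2 * Real.pi * I / k) ^ j := by
  rw [unitRoot, ← exp_nat_mul]
  ring_nf

theorem sum_sq_norm_dilate_unitRoot_le {c : ℕ → ℂ} (hc : Summable fun n => ‖c n‖ ^ 2)
    {f : ℂ → ℂ} (hf : ∀ z : ℂ, ‖z‖ < 1 → HasSum (fun n => c n * z ^ n) (f z))
    {k : ℕ} (hk : k ≠ 0) {r : ℝ} (hr0 : 0 ≤ r) (hr1 : r < 1) :
    1 / (k : ℝ) * ∑ j : Fin k, ‖f (r * unitRoot k j)‖ ^ 2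
      ≤ (∑' n, ‖c n‖ ^ 2) / (1 - r ^ (2 * k)) := by
  have : NeZero k := ⟨hk⟩
  set ζ := exp (2 * Real.pi * I / k)
  have hζ : IsPrimitiveRoot ζ k := isPrimitiveRoot_exp k hk
  let b : Fin k → ℂ := fun m => ∑' l, c (l * k + m) * (r : ℂ) ^ (l * k + m)
  have hf_sample : ∀ j : Fin k,
      f (r * unitRoot k j) = ∑ m : Fin k, (ζ ^ (j : ℕ)) ^ (m : ℕ) * b m := by
    intro j
    have hz : ‖(r : ℂ) * ζ ^ (j : ℕ)‖ < 1 := by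
      rwa [norm_mul, norm_pow, hζ.norm'_eq_one hk, one_pow, mul_one, norm_real,
        Real.norm_of_nonneg hr0]
    have h := hf _ hz
    simp_rw [mul_pow, ← mul_assoc] at h
    rw [unitRoot_eq_pow, ← h.tsum_eq, tsum_mul_pow_eq_sum_pow_mul_tsum
      (by rw [pow_right_comm, hζ.pow_eq_one, one_pow]) h.summable]
  have hb : ∀ m : Fin k, ‖b m‖ ^ 2 ≤ (∑' l, ‖c (l * k + m)‖ ^ 2) / (1 - r ^ (2 * k)) :=
    fun m => sq_norm_tsum_mul_pow_mul_add_le (hc.comp_injective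
      ((add_left_injective _).comp (mul_left_injective₀ hk))) hr0 hr1 hk m
  calc 1 / (k : ℝ) * ∑ j : Fin k, ‖f (r * unitRoot k j)‖ ^ 2 = ∑ m : Fin k, ‖b m‖ ^ 2 := by
        simp_rw [hf_sample]
        rw [hζ.sum_sq_norm_sum_pow_mul]
        field_simp
    _ ≤ ∑ m : Fin k, (∑' l, ‖c (l * k + m)‖ ^ 2) / (1 - r ^ (2 * k)) :=
        sum_le_sum fun m _ => hb m
    _ = (∑' n, ‖c n‖ ^ 2) / (1 - r ^ (2 * k)) := by
        rw [← sum_div, ← hc.tsum_eq_sum_tsum_mul_add]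

theorem one_sub_one_div_pow_two_mul_le_exp_neg_two {k : ℕ} (hk : 1 ≤ k) :
    (1 - 1 / (k : ℝ)) ^ (2 * k) ≤ Real.exp (-2) := by
  have h := Real.one_sub_div_pow_le_exp_neg (n := 2 * k) (t := 2) (by norm_cast; omega)
  rwa [show (2 : ℝ) / (2 * k : ℕ) = 1 / k by push_cast; field_simp] at h

/-- Uniform upper bound: `‖σ_{1-1/k} f‖_k ≤ ‖f‖_{H²} / (1 - e⁻²)^{1/2}`. -/
theorem dilate_discrete_norm_uniform_bound (c : ℕ → ℂ)
    (hc : Summable fun n => ‖c n‖ ^ 2)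
    (f : ℂ → ℂ) (hf : ∀ z : ℂ, ‖z‖ < 1 → HasSum (fun n => c n * z ^ n) (f z))
    (k : ℕ) (hk : 1 ≤ k) :
    Real.sqrt ((1 / (k : ℝ)) * ∑ j : Fin k,
        ‖f (((1 - 1 / (k : ℝ)) : ℂ) * unitRoot k j)‖ ^ 2)
      ≤ Real.sqrt (∑' n, ‖c n‖ ^ 2) / Real.sqrt (1 - Real.exp (-2)) := by
  have hk_inv : 1 / (k : ℝ) ≤ 1 := div_le_one_of_le₀ (by exact_mod_cast hk) (by positivity)
  have hbound := sum_sq_norm_dilate_unitRoot_le hc hf (by omega : k ≠ 0)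
    (sub_nonneg.2 hk_inv) (sub_lt_self 1 (by positivity))
  -- the statement's coercion elaborates to `1 - 1 / ((k : ℝ) : ℂ)`, not `↑(1 - 1 / k)`
  push_cast at hbound ⊢
  rw [← Real.sqrt_div (tsum_nonneg fun _ => by positivity)]
  refine Real.sqrt_le_sqrt (hbound.trans ?_)
  gcongr
  · exact sub_pos.2 (Real.exp_lt_one_iff.2 (by norm_num))
  · exact one_sub_one_div_pow_two_mul_le_exp_neg_two hk
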